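/- Define B(q) = (q;q)_∞^{2/5}/((q;q⁵)_∞ (q⁴;q⁵)_∞) formally via the Rogers–Ramanujan identity: the q-series ∑_{n≥0} q^{n²}/(q;q)ₙ equals 1/((q;q⁵)_∞(q⁴;q⁵)_∞) as formal power series in q. -/

import Mathlib

/-
Following Andrews, the identity is first proved for polynomials and then passed to the limit
`X`-adically. The fermionic polynomials `∑_k q^{k² + ik} [n, k]_q` (`i = 0, 1`) and the bosonic
polynomials `T_n = ∑_j (-1)^j q^{j(5j+1)/2} [2n, n + 2j]_q`, `V_n = ∑_j (-1)^j q^{j(5j+3)/2}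
[2n+1, n+1+2j]_q` satisfy the same first-order recursions (q-Pascal plus the reflections
`j ↦ -j`, `j ↦ -1 - j`), so they agree. As `n → ∞`, `[n, k]_q → 1/(q;q)_k`, so the
fermionic side tends to `∑_k q^{k²}/(q;q)_k` while `T_n` tends to `θ(q)/(q;q)_∞` with
`θ = ∑_j (-1)^j q^{j(5j+1)/2}`. A finite Jacobi triple product,
`∑_j (-1)^j q^{j(5j+1)/2} [2m, m - j]_{q⁵} = (q²;q⁵)_m (q³;q⁵)_m`, identifies `θ` with
`(q²;q⁵)_∞ (q³;q⁵)_∞ (q⁵;q⁵)_∞`, and `(q;q)_∞ = ∏_{r=1}^{5} (q^r;q⁵)_∞` leaves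
`1/((q;q⁵)_∞ (q⁴;q⁵)_∞)`.
-/

open PowerSeries Finset

/-- The infinite product `(q^a; q^b)_∞ = ∏_{k≥0} (1 - q^{a+bk})` as a formal power series:
its `n`-th coefficient agrees with that of the (stabilized) finite partial product. -/
noncomputable def qPochhammer (R : Type*) [CommRing R] (a b : ℕ) : PowerSeries R :=
  PowerSeries.mk fun n =>
    PowerSeries.coeff n (∏ k ∈ Finset.range (n + 1), (1 - (X : PowerSeries R) ^ (a + b * k)))

/-- The finite product `(q;q)ₙ = ∏_{k=1}^{n} (1 - qᵏ)`. -/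
noncomputable def qPochFin (n : ℕ) : PowerSeries ℚ :=
  ∏ k ∈ Finset.range n, (1 - (X : PowerSeries ℚ) ^ (k + 1))

namespace RogersRamanujan

section GaussianBinomial

variable {R : Type*} [CommRing R] (q : R)

/-- `(q^a; q^b)_m`. -/
noncomputable def qProd (a b m : ℕ) : R := ∏ k ∈ range m, (1 - q ^ (a + b * k))

lemma qProd_succ (a b m : ℕ) : qProd q a b (m + 1) = qProd q a b m * (1 - q ^ (a + b * m)) :=
  prod_range_succ _ _

/-- The Gaussian binomial coefficient `[N, K]_q`, extended by zero to all integers `K`. -/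
def qBinom : ℕ → ℤ → R
  | 0, K => if K = 0 then 1 else 0
  | N + 1, K => qBinom N (K - 1) + q ^ K.toNat * qBinom N K

lemma qBinom_succ (N : ℕ) (K : ℤ) :
    qBinom q (N + 1) K = qBinom q N (K - 1) + q ^ K.toNat * qBinom q N K := rfl

lemma qBinom_eq_zero {N : ℕ} {K : ℤ} (h : K < 0 ∨ N < K) : qBinom q N K = 0 := by
  induction N generalizing K with
  | zero => exact if_neg (by omega)
  | succ N ih => rw [qBinom_succ, ih (by omega), ih (by omega), mul_zero, add_zero]

lemma qBinom_zero_right (N : ℕ) : qBinom q N 0 = 1 := by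
  induction N with
  | zero => rfl
  | succ N ih => simp [qBinom_succ, ih, qBinom_eq_zero q (N := N) (K := -1) (by omega)]

lemma qBinom_self (N : ℕ) : qBinom q N N = 1 := by
  induction N with
  | zero => rfl
  | succ N ih => simp [qBinom_succ, ih, qBinom_eq_zero q (N := N) (K := N + 1) (by omega)]

lemma one_sub_pow_mul_qBinom (N k : ℕ) (hk : k ≤ N + 1) :
    (1 - q ^ (N + 1 - k)) * qBinom q N (k - 1) = (1 - q ^ k) * qBinom q N k := by
  induction N generalizing k with
  | zero => interval_cases k <;> simp [qBinom]
  | succ N ih =>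
    rcases k with _ | k
    · simp [qBinom_eq_zero q (N := N + 1) (K := -1) (by omega)]
    rw [qBinom_succ, qBinom_succ, show ((k + 1 : ℕ) : ℤ) - 1 = k by push_cast; ring,
      show ((k + 1 : ℕ) : ℤ).toNat = k + 1 by omega, Int.toNat_natCast]
    rcases (show k ≤ N ∨ k = N + 1 by omega) with hkN | rfl
    · have h₁ := ih k (by omega)
      have h₂ := ih (k + 1) (by omega)
      rw [show ((k + 1 : ℕ) : ℤ) - 1 = k by push_cast; ring] at h₂
      rw [show N + 1 + 1 - (k + 1) = N + 1 - k by omega, pow_succ q k]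
      rw [show N + 1 - k = N - k + 1 by omega, pow_succ] at h₁ ⊢
      rw [show N + 1 - (k + 1) = N - k by omega] at h₂
      linear_combination h₁ + q ^ k * q * h₂
    · simp [qBinom_eq_zero q (N := N) (K := N + 1) (by omega),
        qBinom_eq_zero q (N := N) (K := N + 1 + 1) (by omega)]

lemma qBinom_succ' (N : ℕ) (K : ℤ) :
    qBinom q (N + 1) K = q ^ (N + 1 - K).toNat * qBinom q N (K - 1) + qBinom q N K := by
  by_cases hK : 0 ≤ K ∧ K ≤ N + 1
  · obtain ⟨k, rfl⟩ : ∃ k : ℕ, K = k := ⟨K.toNat, by omega⟩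
    have h := one_sub_pow_mul_qBinom q N k (by omega)
    rw [qBinom_succ, Int.toNat_natCast, show ((N : ℤ) + 1 - k).toNat = N + 1 - k by omega]
    linear_combination h
  · rw [qBinom_eq_zero q (by omega), qBinom_eq_zero q (N := N) (K := K - 1) (by omega),
      qBinom_eq_zero q (N := N) (K := K) (by omega)]
    simp

lemma qBinom_symm (N : ℕ) (K : ℤ) : qBinom q N (N - K) = qBinom q N K := by
  induction N generalizing K with
  | zero => by_cases hK : K = 0 <;> simp [qBinom, hK]
  | succ N ih =>
    rw [qBinom_succ, qBinom_succ', ← ih K, ← ih (K - 1)]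
    push_cast
    ring_nf

lemma qBinom_mul_qProd {N K : ℕ} (h : K ≤ N) :
    qBinom q N K * qProd q 1 1 K * qProd q 1 1 (N - K) = qProd q 1 1 N := by
  induction N generalizing K with
  | zero => obtain rfl : K = 0 := by omega
            simp [qBinom, qProd]
  | succ N ih =>
    rcases K with _ | k
    · simp [qBinom_zero_right, qProd]
    rw [qBinom_succ, show ((k + 1 : ℕ) : ℤ) - 1 = k by push_cast; ring, Int.toNat_natCast,
      qProd_succ, qProd_succ, show N + 1 - (k + 1) = N - k by omega]
    rcases (show k < N ∨ k = N by omega) with hkN | rfl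
    · have h₁ := ih (K := k) (by omega)
      have h₂ := ih (K := k + 1) (by omega)
      rw [show N - k = N - (k + 1) + 1 by omega, qProd_succ] at h₁ ⊢
      rw [qProd_succ] at h₂
      rw [show 1 + 1 * (N - (k + 1)) = N - k by omega] at h₁ ⊢
      have hq : q ^ (k + 1) * q ^ (N - k) = q ^ (1 + 1 * N) := by
        rw [← pow_add]; congr 1; omega
      rw [show 1 + 1 * k = k + 1 by ring] at h₂ ⊢
      linear_combination (1 - q ^ (k + 1)) * h₁ + q ^ (k + 1) * (1 - q ^ (N - k)) * h₂ -
        qProd q 1 1 N * hq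
    · rw [qBinom_eq_zero q (N := k) (K := ↑(k + 1)) (by omega), qBinom_self, Nat.sub_self]
      simp [qProd]

lemma pow_mul_qBinom_congr {Q : R} {N : ℕ} {K : ℤ} {e e' : ℕ}
    (h : 0 ≤ K → K ≤ N → e = e') : q ^ e * qBinom Q N K = q ^ e' * qBinom Q N K := by
  by_cases hK : 0 ≤ K ∧ K ≤ N
  · rw [h hK.1 hK.2]
  · rw [qBinom_eq_zero Q (by omega), mul_zero, mul_zero]

lemma hasFiniteSupport_of_qBinom {M : Type*} [Zero M] (N : ℕ) {g : ℤ → ℤ} (hg : g.Injective)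
    {f : ℤ → M} (hf : ∀ j, qBinom q N (g j) = 0 → f j = 0) : f.HasFiniteSupport :=
  ((Set.finite_Icc 0 (N : ℤ)).preimage hg.injOn).subset fun j hj => by
    by_contra h
    exact hj (hf j (qBinom_eq_zero q (by simp only [Set.mem_preimage, Set.mem_Icc] at h; omega)))

end GaussianBinomial

section Fermionic

variable {R : Type*} [CommRing R] (q : R)

noncomputable def fermionicSum (i n : ℕ) : R :=
  ∑ k ∈ range (n + 1), q ^ (k * k + i * k) * qBinom q n k

lemma sum_range_succ_mul_qBinom (f : ℕ → R) (n : ℕ) :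
    ∑ k ∈ range (n + 2), f k * qBinom q n k = ∑ k ∈ range (n + 1), f k * qBinom q n k := by
  rw [sum_range_succ, qBinom_eq_zero q (by omega), mul_zero, add_zero]

lemma sum_range_succ_mul_qBinom_sub_one (f : ℕ → R) (n : ℕ) :
    ∑ k ∈ range (n + 2), f k * qBinom q n (k - 1) =
      ∑ k ∈ range (n + 1), f (k + 1) * qBinom q n k := by
  rw [sum_range_succ', qBinom_eq_zero q (by omega), mul_zero, add_zero]
  push_cast
  simp only [add_sub_cancel_right]

lemma fermionicSum_zero (i : ℕ) : fermionicSum q i 0 = 1 := by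
  simp [fermionicSum, qBinom_zero_right]

lemma fermionicSum_succ (i n : ℕ) :
    fermionicSum q i (n + 1) =
      fermionicSum q i n + q ^ (n + 1 + i) * fermionicSum q (i + 1) n := by
  simp only [fermionicSum, qBinom_succ', mul_add, ← mul_assoc, ← pow_add, sum_add_distrib,
    sum_range_succ_mul_qBinom, sum_range_succ_mul_qBinom_sub_one, mul_sum]
  rw [add_comm]
  congr 1
  refine sum_congr rfl fun k hk => ?_
  have hkn : k ≤ n := Nat.lt_succ_iff.mp (mem_range.mp hk)
  rw [show ((n : ℤ) + 1 - ↑(k + 1)).toNat = n - k by omega]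
  congr 2
  zify [hkn]
  ring

lemma fermionicSum_succ' (i n : ℕ) :
    fermionicSum q i (n + 1) =
      fermionicSum q (i + 1) n + q ^ (i + 1) * fermionicSum q (i + 2) n := by
  simp only [fermionicSum, qBinom_succ, mul_add, ← mul_assoc, ← pow_add, sum_add_distrib,
    sum_range_succ_mul_qBinom, sum_range_succ_mul_qBinom_sub_one, mul_sum, Int.toNat_natCast]
  rw [add_comm]
  congr 1 <;> refine sum_congr rfl fun k _ => ?_ <;> congr 2 <;> ring

end Fermionic

lemma finsum_eq_zero_of_neg_one_sub {M : Type*} [AddCommGroup M] {f : ℤ → M}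
    (h : ∀ j, f (-1 - j) = -f j) : ∑ᶠ j, f j = 0 := by
  by_cases hf : f.HasFiniteSupport
  · rw [finsum_eq_sum f hf]
    refine sum_involution (fun j _ => -1 - j) (fun j _ => by rw [h, add_neg_cancel])
      (fun j _ _ => by omega) (fun j hj => ?_) (fun j _ => by ring)
    have hj' : f j ≠ 0 := (Set.Finite.mem_toFinset hf).mp hj
    exact (Set.Finite.mem_toFinset hf).mpr
      (by rw [Function.mem_support, h]; exact neg_ne_zero.mpr hj')
  · exact finsum_of_infinite_support hf

lemma finsum_eq_mul_finsum_add_finsum {α β R : Type*} [Semiring R] {f : α → R} {g : β → R}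
    {h : α → R} (e : α ≃ β) (c : R) (hg : g.HasFiniteSupport) (hh : h.HasFiniteSupport)
    (H : ∀ j, f j = c * g (e j) + h j) : ∑ᶠ j, f j = c * ∑ᶠ j, g j + ∑ᶠ j, h j := by
  have hge : (fun j => g (e j)).HasFiniteSupport := hg.fun_comp_of_injective e.injective
  rw [finsum_congr H, finsum_add_distrib (hge.fun_mul_right _) hh, ← mul_finsum' _ _ hge,
    finsum_comp_equiv e]

section Exponents

/-- For `a = 1, 3` the division is exact and the value nonnegative (`two_mul_rrExp`). -/
def rrExp (a j : ℤ) : ℕ := (j * (5 * j + a) / 2).toNat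

lemma two_mul_rrExp {a : ℤ} (ha : a = 1 ∨ a = 3) (j : ℤ) :
    2 * (rrExp a j : ℤ) = j * (5 * j + a) := by
  obtain ⟨t, ht⟩ := Int.even_mul_succ_self j
  have hdvd : 2 ∣ j * (5 * j + a) := by
    rcases ha with rfl | rfl
    · exact ⟨2 * j ^ 2 + t, by linear_combination ht⟩
    · exact ⟨2 * j ^ 2 + j + t, by linear_combination ht⟩
  have hnonneg : 0 ≤ j * (5 * j + a) := by
    rcases ha with rfl | rfl <;> rcases le_or_gt 0 j with h | h <;> nlinarith
  rw [rrExp, Int.toNat_of_nonneg (Int.ediv_nonneg hnonneg (by norm_num)),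
    Int.mul_ediv_cancel' hdvd]

lemma rrExp_neg {a b : ℤ} (ha : a = 1 ∨ a = 3) (hab : a + b = 4) (j : ℤ) :
    (rrExp a (-j) : ℤ) + 2 * j = rrExp b j := by
  have h₁ := two_mul_rrExp ha (-j)
  have h₂ := two_mul_rrExp (a := b) (by omega) j
  obtain rfl : b = 4 - a := by omega
  rcases ha with rfl | rfl <;> norm_num at h₂ ⊢ <;> linarith

lemma rrExp_neg_one_sub {a : ℤ} (ha : a = 1 ∨ a = 3) (j : ℤ) :
    2 * (rrExp a (-1 - j) : ℤ) = 2 * rrExp a j + (5 - a) * (2 * j + 1) := by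
  have h₁ := two_mul_rrExp ha (-1 - j)
  have h₂ := two_mul_rrExp ha j
  rcases ha with rfl | rfl <;> linarith

lemma rrExp_add_one (j : ℤ) : (rrExp 1 (j + 1) : ℤ) = rrExp 1 j + 5 * j + 3 := by
  have h₁ := two_mul_rrExp (a := 1) (by simp) (j + 1)
  have h₂ := two_mul_rrExp (a := 1) (by simp) j
  linarith

lemma sq_le_rrExp (j : ℤ) : j ^ 2 ≤ rrExp 1 j := by
  have h := two_mul_rrExp (a := 1) (by simp) j
  rcases le_or_gt 0 j with h' | h' <;> nlinarith

end Exponents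

lemma negOnePow_neg_one_sub (j : ℤ) : (-1 - j).negOnePow = -j.negOnePow := by
  rw [Int.negOnePow_sub, Int.negOnePow_neg, Int.negOnePow_one, neg_one_mul]

section Bosonic

variable {R : Type*} [CommRing R] (q : R)

noncomputable def bosonicTerm (a : ℤ) (N : ℕ) (c j : ℤ) : R :=
  (j.negOnePow : R) * (q ^ rrExp a j * qBinom q N (c + 2 * j))

noncomputable def bosonicSum (a : ℤ) (N : ℕ) (c : ℤ) : R := ∑ᶠ j, bosonicTerm q a N c j

lemma bosonicTerm_hasFiniteSupport (a : ℤ) (N : ℕ) (c : ℤ) :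
    (bosonicTerm q a N c).HasFiniteSupport :=
  hasFiniteSupport_of_qBinom q N (g := fun j => c + 2 * j) (fun x y h => by simp only at h; omega)
    fun j h => by simp [bosonicTerm, h]

lemma bosonicSum_zero : bosonicSum q 1 0 0 = 1 := by
  rw [bosonicSum, finsum_eq_single _ 0 fun j hj => by
    simp [bosonicTerm, qBinom_eq_zero q (N := 0) (K := 2 * j) (by omega)]]
  simp [bosonicTerm, rrExp, qBinom_zero_right]

lemma bosonicSum_three_one_one : bosonicSum q 3 1 1 = 1 := by
  rw [bosonicSum, finsum_eq_single _ 0 fun j hj => by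
    simp [bosonicTerm, qBinom_eq_zero q (N := 1) (K := 1 + 2 * j) (by omega)]]
  simpa [bosonicTerm, rrExp] using qBinom_self q 1

/-- The termwise difference is antisymmetric under `j ↦ -1 - j`. -/
lemma bosonicSum_odd_eq_even (n : ℕ) :
    bosonicSum q 1 (2 * n + 1) (n + 1) = bosonicSum q 1 (2 * n) n := by
  have hD : ∀ j, bosonicTerm q 1 (2 * n + 1) (n + 1) j - bosonicTerm q 1 (2 * n) n j =
      j.negOnePow *
        (q ^ (rrExp 1 j + (n + 1 + 2 * j).toNat) * qBinom q (2 * n) (n + 1 + 2 * j)) := by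
    intro j
    rw [bosonicTerm, bosonicTerm, qBinom_succ, pow_add,
      show (n : ℤ) + 1 + 2 * j - 1 = n + 2 * j by ring]
    ring
  rw [← sub_eq_zero, bosonicSum, bosonicSum,
    ← finsum_sub_distrib (bosonicTerm_hasFiniteSupport ..) (bosonicTerm_hasFiniteSupport ..)]
  refine finsum_eq_zero_of_neg_one_sub fun j => ?_
  have hE := rrExp_neg_one_sub (a := 1) (by simp) j
  rw [hD, hD, negOnePow_neg_one_sub,
    show (n : ℤ) + 1 + 2 * (-1 - j) = ↑(2 * n) - (n + 1 + 2 * j) by push_cast; ring, qBinom_symm,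
    pow_mul_qBinom_congr q (e' := rrExp 1 j + (n + 1 + 2 * j).toNat) fun _ _ => by omega]
  push_cast
  ring

lemma bosonicSum_even_succ (n : ℕ) :
    bosonicSum q 1 (2 * (n + 1)) (n + 1 : ℕ) =
      q ^ (n + 1) * bosonicSum q 3 (2 * n + 1) (n + 1) + bosonicSum q 1 (2 * n + 1) (n + 1) := by
  refine finsum_eq_mul_finsum_add_finsum (Equiv.neg ℤ) _ (bosonicTerm_hasFiniteSupport ..)
    (bosonicTerm_hasFiniteSupport ..) fun j => ?_
  have hE := rrExp_neg (a := 3) (b := 1) (by simp) (by norm_num) j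
  simp only [Equiv.neg_apply, bosonicTerm, Int.negOnePow_neg]
  rw [show 2 * (n + 1) = 2 * n + 1 + 1 by ring]
  push_cast
  have hB : qBinom q (2 * n + 1) (n + 1 + 2 * -j) = qBinom q (2 * n + 1) (n + 1 + 2 * j - 1) := by
    rw [← qBinom_symm]; congr 1; push_cast; ring
  have h : q ^ (n + 1 + rrExp 3 (-j)) * qBinom q (2 * n + 1) (n + 1 + 2 * j - 1) =
      q ^ (rrExp 1 j + (↑(2 * n + 1) + 1 - (n + 1 + 2 * j)).toNat) *
        qBinom q (2 * n + 1) (n + 1 + 2 * j - 1) :=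
    pow_mul_qBinom_congr q fun _ _ => by push_cast; omega
  rw [qBinom_succ', hB]
  push_cast at h ⊢
  linear_combination -(j.negOnePow : R) * h

lemma bosonicSum_odd_succ (n : ℕ) :
    bosonicSum q 3 (2 * (n + 1) + 1) ((n + 1 : ℕ) + 1) =
      q ^ (n + 1) * bosonicSum q 1 (2 * (n + 1)) (n + 1 : ℕ) +
        (bosonicSum q 3 (2 * n + 1) (n + 1) -
          q ^ (n + 1) * bosonicSum q 3 (2 * n + 1) (n + 1)) := by
  have hV := bosonicTerm_hasFiniteSupport q 3 (2 * n + 1) (n + 1)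
  have hinner := finsum_eq_mul_finsum_add_finsum (Equiv.subLeft (-1)) (-q ^ (n + 1)) hV hV
    (f := fun j => -q ^ (n + 1) * bosonicTerm q 3 (2 * n + 1) (n + 1) (-1 - j) +
      bosonicTerm q 3 (2 * n + 1) (n + 1) j) fun _ => rfl
  rw [sub_eq_neg_add, ← neg_mul]
  unfold bosonicSum
  rw [← hinner]
  refine finsum_eq_mul_finsum_add_finsum (Equiv.neg ℤ) _ (bosonicTerm_hasFiniteSupport ..)
    (by fun_prop (disch := exact (Equiv.subLeft (-1)).injective)) fun j => ?_
  have hE₁ := rrExp_neg (a := 1) (b := 3) (by simp) (by norm_num) j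
  have hE₂ := rrExp_neg_one_sub (a := 3) (by simp) j
  simp only [Equiv.neg_apply, bosonicTerm, Int.negOnePow_neg, negOnePow_neg_one_sub]
  rw [show 2 * (n + 1) + 1 = 2 * n + 1 + 1 + 1 by ring, show 2 * (n + 1) = 2 * n + 1 + 1 by ring]
  push_cast
  set K : ℤ := n + 1 + 1 + 2 * j with hK
  have hB₁ :
      qBinom q (2 * n + 1 + 1) (n + 1 + 2 * -j) = qBinom q (2 * n + 1 + 1) (n + 1 + 2 * j) := by
    rw [← qBinom_symm]; congr 1; push_cast; ring
  have hB₂ : qBinom q (2 * n + 1) (n + 1 + 2 * (-1 - j)) = qBinom q (2 * n + 1) K := by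
    rw [← qBinom_symm]; congr 1; push_cast; ring
  have h₁ : q ^ (n + 1 + rrExp 1 (-j)) * qBinom q (2 * n + 1 + 1) (n + 1 + 2 * j) =
      q ^ (rrExp 3 j + (↑(2 * n + 1 + 1) + 1 - K).toNat) *
        qBinom q (2 * n + 1 + 1) (n + 1 + 2 * j) :=
    pow_mul_qBinom_congr q fun _ _ => by push_cast; omega
  have h₂ : q ^ (n + 1 + rrExp 3 (-1 - j)) * qBinom q (2 * n + 1) K =
      q ^ (rrExp 3 j + K.toNat) * qBinom q (2 * n + 1) K :=
    pow_mul_qBinom_congr q fun _ _ => by omega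
  rw [qBinom_succ', qBinom_succ q (2 * n + 1) K, hB₁, hB₂, show K - 1 = n + 1 + 2 * j by omega]
  linear_combination -(j.negOnePow : R) * (h₁ + h₂)

theorem fermionicSum_eq_bosonicSum (n : ℕ) :
    fermionicSum q 0 n = bosonicSum q 1 (2 * n) n ∧
      fermionicSum q 1 n = bosonicSum q 3 (2 * n + 1) (n + 1) := by
  induction n with
  | zero =>
    simpa [fermionicSum_zero] using
      ⟨(bosonicSum_zero q).symm, (bosonicSum_three_one_one q).symm⟩
  | succ n ih =>
    have h₀ : fermionicSum q 0 (n + 1) = bosonicSum q 1 (2 * (n + 1)) (n + 1 : ℕ) := by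
      rw [fermionicSum_succ, bosonicSum_even_succ, bosonicSum_odd_eq_even, ih.1, ih.2]
      ring
    refine ⟨h₀, ?_⟩
    have hS₁ := fermionicSum_succ q 1 n
    have hS₀ := fermionicSum_succ' q 0 n
    rw [bosonicSum_odd_succ, ← h₀, ← ih.2]
    linear_combination hS₁ - q ^ (n + 1) * hS₀

end Bosonic

section Theta

variable {R : Type*} [CommRing R] (q : R)

noncomputable def thetaTerm (N : ℕ) (c j : ℤ) : R :=
  (j.negOnePow : R) * (q ^ rrExp 1 j * qBinom (q ^ 5) N (c - j))

noncomputable def thetaSum (N : ℕ) (c : ℤ) : R := ∑ᶠ j, thetaTerm q N c j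

lemma thetaTerm_hasFiniteSupport (N : ℕ) (c : ℤ) : (thetaTerm q N c).HasFiniteSupport :=
  hasFiniteSupport_of_qBinom (q ^ 5) N (g := fun j => c - j) (fun x y h => by simp only at h; omega)
    fun j h => by simp [thetaTerm, h]

lemma thetaSum_zero : thetaSum q 0 0 = 1 := by
  rw [thetaSum, finsum_eq_single _ 0 fun j hj => by
    simp [thetaTerm, qBinom_eq_zero (q ^ 5) (N := 0) (K := -j) (by omega)]]
  simp [thetaTerm, rrExp, qBinom_zero_right]

lemma thetaSum_odd (m : ℕ) :
    thetaSum q (2 * m + 1) m = -q ^ (5 * m + 2) * thetaSum q (2 * m) m + thetaSum q (2 * m) m := by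
  refine finsum_eq_mul_finsum_add_finsum (Equiv.addRight 1) _ (thetaTerm_hasFiniteSupport ..)
    (thetaTerm_hasFiniteSupport ..) fun j => ?_
  have hE := rrExp_add_one j
  simp only [Equiv.coe_addRight, thetaTerm, Int.negOnePow_succ]
  have h : q ^ (rrExp 1 j + 5 * (↑(2 * m) + 1 - (m - j)).toNat) *
      qBinom (q ^ 5) (2 * m) (m - j - 1) =
      q ^ (5 * m + 2 + rrExp 1 (j + 1)) * qBinom (q ^ 5) (2 * m) (m - j - 1) :=
    pow_mul_qBinom_congr q fun _ _ => by push_cast; omega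
  rw [qBinom_succ', show (m : ℤ) - (j + 1) = m - j - 1 by ring]
  push_cast at h ⊢
  linear_combination (j.negOnePow : R) * h

lemma thetaSum_even_succ (m : ℕ) :
    thetaSum q (2 * (m + 1)) (m + 1 : ℕ) =
      -q ^ (5 * m + 3) * thetaSum q (2 * m + 1) m + thetaSum q (2 * m + 1) m := by
  refine finsum_eq_mul_finsum_add_finsum (Equiv.subRight 1) _ (thetaTerm_hasFiniteSupport ..)
    (thetaTerm_hasFiniteSupport ..) fun j => ?_
  have hE := rrExp_add_one (j - 1)
  rw [sub_add_cancel] at hE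
  simp only [Equiv.subRight_apply, thetaTerm, Int.negOnePow_sub, Int.negOnePow_one]
  have h : q ^ (rrExp 1 j + 5 * ((m : ℤ) - (j - 1)).toNat) *
      qBinom (q ^ 5) (2 * m + 1) (m - (j - 1)) =
      q ^ (5 * m + 3 + rrExp 1 (j - 1)) * qBinom (q ^ 5) (2 * m + 1) (m - (j - 1)) :=
    pow_mul_qBinom_congr q fun _ _ => by omega
  rw [show 2 * (m + 1) = 2 * m + 1 + 1 by ring, qBinom_succ,
    show ((m + 1 : ℕ) : ℤ) - j - 1 = m - j by push_cast; ring,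
    show ((m + 1 : ℕ) : ℤ) - j = m - (j - 1) by push_cast; ring]
  push_cast at h ⊢
  linear_combination (j.negOnePow : R) * h

theorem thetaSum_eq_qProd (m : ℕ) : thetaSum q (2 * m) m = qProd q 2 5 m * qProd q 3 5 m := by
  induction m with
  | zero => simpa [qProd] using thetaSum_zero q
  | succ m ih =>
    rw [thetaSum_even_succ, thetaSum_odd, ih, qProd_succ, qProd_succ]
    ring

end Theta

section Products

variable {R : Type*} [CommRing R]

lemma qProd_pow (q : R) (c a b m : ℕ) : qProd (q ^ c) a b m = qProd q (c * a) (c * b) m := by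
  simp only [qProd, ← pow_mul]
  exact prod_congr rfl fun k _ => by ring_nf

lemma qProd_five_mul (q : R) (m : ℕ) :
    qProd q 1 1 (5 * m) =
      qProd q 1 5 m * qProd q 4 5 m * (qProd q 2 5 m * qProd q 3 5 m * qProd q 5 5 m) := by
  induction m with
  | zero => simp [qProd]
  | succ m ih =>
    rw [show 5 * (m + 1) = 5 * m + 1 + 1 + 1 + 1 + 1 by ring]
    simp only [qProd_succ, ih]
    ring_nf

end Products

section Truncation

variable {R : Type*} [CommRing R] {n : ℕ}

lemma smodEq_X_pow_iff {f g : R⟦X⟧} :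
    f ≡ g [SMOD Ideal.span {X ^ n}] ↔ ∀ i < n, coeff i f = coeff i g := by
  simp only [SModEq.sub_mem, Ideal.mem_span_singleton, X_pow_dvd_iff, map_sub, sub_eq_zero]

lemma X_pow_mul_smodEq_zero {e : ℕ} (h : n ≤ e) (f : R⟦X⟧) :
    X ^ e * f ≡ 0 [SMOD Ideal.span {X ^ n}] :=
  SModEq.zero.mpr (Ideal.mem_span_singleton.mpr (dvd_mul_of_dvd_left (pow_dvd_pow X h) f))

lemma prod_range_one_sub_smodEq {I : Ideal R} {f : ℕ → R} {m m' : ℕ} (h : m ≤ m')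
    (hf : ∀ i, m ≤ i → f i ∈ I) :
    ∏ i ∈ range m', (1 - f i) ≡ ∏ i ∈ range m, (1 - f i) [SMOD I] := by
  rw [← prod_range_mul_prod_Ico _ h]
  conv_rhs => rw [← mul_one (∏ i ∈ range m, (1 - f i))]
  refine SModEq.rfl.mul ?_
  rw [← prod_const_one (s := Ico m m')]
  exact SModEq.prod fun i hi =>
    SModEq.sub_mem.mpr (by simpa using I.neg_mem (hf i (mem_Ico.mp hi).1))

lemma qProd_smodEq {q : R⟦X⟧} (hq : X ∣ q) {a b m m' : ℕ} (hm : n ≤ a + b * m)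
    (hm' : n ≤ a + b * m') : qProd q a b m ≡ qProd q a b m' [SMOD Ideal.span {X ^ n}] := by
  have key : ∀ {m m'}, n ≤ a + b * m → m ≤ m' →
      qProd q a b m' ≡ qProd q a b m [SMOD Ideal.span {X ^ n}] :=
    fun hm h => prod_range_one_sub_smodEq h fun i hi => Ideal.mem_span_singleton.mpr
      ((pow_dvd_pow X (hm.trans (by gcongr))).trans (pow_dvd_pow_of_dvd hq _))
  rcases le_total m m' with h | h
  · exact (key hm h).symm
  · exact key hm' h

lemma constantCoeff_qProd {q : R⟦X⟧} (hq : X ∣ q) {a b : ℕ} (ha : 1 ≤ a) (m : ℕ) :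
    constantCoeff (qProd q a b m) = 1 := by
  simp only [qProd, map_prod, map_sub, map_one, map_pow, X_dvd_iff.mp hq]
  exact prod_eq_one fun k _ => by rw [zero_pow (by omega), sub_zero]

lemma qPochhammer_smodEq {a b : ℕ} (hb : 1 ≤ b) {m : ℕ} (hm : n ≤ m) :
    qPochhammer R a b ≡ qProd X a b m [SMOD Ideal.span {X ^ n}] := by
  refine smodEq_X_pow_iff.mpr fun i hi => ?_
  rw [qPochhammer, coeff_mk]
  exact smodEq_X_pow_iff.mp (qProd_smodEq dvd_rfl (n := i + 1) (m := i + 1) (by nlinarith)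
    (by nlinarith)) i (by omega)

lemma constantCoeff_qPochhammer {a b : ℕ} (ha : 1 ≤ a) (hb : 1 ≤ b) :
    constantCoeff (qPochhammer R a b) = 1 := by
  have h := smodEq_X_pow_iff.mp (qPochhammer_smodEq (R := R) (a := a) (n := 1) hb le_rfl) 0 one_pos
  rwa [coeff_zero_eq_constantCoeff_apply, coeff_zero_eq_constantCoeff_apply,
    constantCoeff_qProd dvd_rfl ha] at h

end Truncation

section Approximation

variable {k : Type*} [Field k] {n : ℕ}

lemma smodEq_mul_inv_iff {I : Ideal k⟦X⟧} {a b u : k⟦X⟧} (hu : constantCoeff u ≠ 0) :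
    a ≡ b * u⁻¹ [SMOD I] ↔ a * u ≡ b [SMOD I] := by
  constructor
  · intro h
    simpa [mul_assoc, PowerSeries.inv_mul_cancel u hu] using h.mul (SModEq.refl u)
  · intro h
    simpa [mul_assoc, PowerSeries.mul_inv_cancel u hu] using h.mul (SModEq.refl u⁻¹)

lemma smodEq_inv {I : Ideal k⟦X⟧} {f g : k⟦X⟧} (hf : constantCoeff f ≠ 0)
    (hg : constantCoeff g ≠ 0) (h : f ≡ g [SMOD I]) : f⁻¹ ≡ g⁻¹ [SMOD I] := by
  rw [← one_mul g⁻¹, smodEq_mul_inv_iff hg, ← PowerSeries.inv_mul_cancel f hf]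
  exact SModEq.rfl.mul h.symm

lemma smodEq_inv_of_mul_mul_smodEq {I : Ideal k⟦X⟧} {t a c : k⟦X⟧}
    (ha : constantCoeff a ≠ 0) (hc : constantCoeff c ≠ 0) (h : t * (a * c) ≡ c [SMOD I]) :
    t ≡ a⁻¹ [SMOD I] := by
  rw [← one_mul a⁻¹, smodEq_mul_inv_iff ha]
  simpa [mul_assoc, PowerSeries.mul_inv_cancel c hc] using h.mul (SModEq.refl c⁻¹)

/-- `[N, K]_q (q;q)_K (q;q)_{N-K} = (q;q)_N`, and `(q;q)_N ≡ (q;q)_{N-K}` once `N - K` is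
large. -/
lemma qBinom_smodEq_inv {q : k⟦X⟧} (hq : X ∣ q) {N K : ℕ} (hK : K ≤ N)
    (hn : n ≤ N - K + 1) :
    qBinom q N K ≡ (qProd q 1 1 K)⁻¹ [SMOD Ideal.span {X ^ n}] := by
  have hc : ∀ m, constantCoeff (qProd q 1 1 m) ≠ 0 := fun m => by
    simp [constantCoeff_qProd hq]
  rw [← one_mul (qProd q 1 1 K)⁻¹, smodEq_mul_inv_iff (hc K)]
  have h : qBinom q N K * qProd q 1 1 K * qProd q 1 1 (N - K) ≡ 1 * qProd q 1 1 (N - K)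
      [SMOD Ideal.span {X ^ n}] := by
    rw [qBinom_mul_qProd q hK, one_mul]
    exact qProd_smodEq hq (by omega) (by omega)
  simpa [mul_assoc, PowerSeries.mul_inv_cancel _ (hc (N - K))] using
    h.mul (SModEq.refl (qProd q 1 1 (N - K))⁻¹)

noncomputable def thetaPartial (L : ℕ) : k⟦X⟧ :=
  ∑ j ∈ Icc (-(L : ℤ)) L, (j.negOnePow : k⟦X⟧) * X ^ rrExp 1 j

lemma thetaPartial_smodEq {L : ℕ} (hL : n ≤ L) :
    thetaPartial (k := k) L ≡ thetaPartial n [SMOD Ideal.span {X ^ n}] := by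
  have hsub : Icc (-(n : ℤ)) n ⊆ Icc (-(L : ℤ)) L := Icc_subset_Icc (by omega) (by omega)
  rw [thetaPartial, thetaPartial, ← sum_sdiff hsub]
  conv_rhs => rw [← zero_add (∑ j ∈ Icc (-(n : ℤ)) n, _)]
  refine SModEq.add ?_ SModEq.rfl
  rw [← sum_const_zero (s := Icc (-(L : ℤ)) L \ Icc (-(n : ℤ)) n)]
  refine SModEq.sum fun j hj => ?_
  have hj : (n : ℤ) < |j| := by
    simp only [mem_sdiff, mem_Icc] at hj
    rcases abs_cases j with ⟨h, _⟩ | ⟨h, _⟩ <;> omega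
  have hE : n ≤ rrExp 1 j := by
    have := sq_le_rrExp j
    nlinarith [sq_abs j, abs_nonneg j]
  rw [mul_comm]
  exact X_pow_mul_smodEq_zero hE _

/-- The terms with `j(5j+1)/2 ≥ n` vanish modulo `X^n`; the others see `B j ≡ u`. -/
lemma finsum_smodEq_thetaPartial {B : ℤ → k⟦X⟧} {u : k⟦X⟧} {L : ℕ} (hL : n ≤ L)
    (hsupp : ∀ j, B j ≠ 0 → -(L : ℤ) ≤ j ∧ j ≤ L)
    (hB : ∀ j, rrExp 1 j < n → B j ≡ u [SMOD Ideal.span {X ^ n}]) :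
    ∑ᶠ j, (j.negOnePow : k⟦X⟧) * (X ^ rrExp 1 j * B j) ≡ thetaPartial n * u
      [SMOD Ideal.span {X ^ n}] := by
  rw [finsum_eq_sum_of_support_subset _ (s := Icc (-(L : ℤ)) L) fun j hj => by
    simpa using hsupp j fun h => hj (by simp [h])]
  have hθ : thetaPartial (k := k) L * u ≡ thetaPartial n * u [SMOD Ideal.span {X ^ n}] :=
    (thetaPartial_smodEq (k := k) hL).mul (SModEq.refl u)
  refine SModEq.trans ?_ hθ
  rw [thetaPartial, sum_mul]
  refine SModEq.sum fun j _ => ?_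
  rw [mul_assoc]
  refine SModEq.rfl.mul ?_
  by_cases h : rrExp 1 j < n
  · exact SModEq.rfl.mul (hB j h)
  · exact (X_pow_mul_smodEq_zero (by omega) _).trans (X_pow_mul_smodEq_zero (by omega) _).symm

lemma abs_lt_of_rrExp_lt {j : ℤ} (hj : rrExp 1 j < n) : |j| < n :=
  have h : j ^ 2 < n := (sq_le_rrExp j).trans_lt (Nat.cast_lt.mpr hj)
  abs_lt.mpr ⟨by linarith [Int.le_self_sq (-j), neg_sq j], (Int.le_self_sq j).trans_lt h⟩

lemma bosonicSum_smodEq {N P : ℕ} (hN : 3 * n ≤ N) (hP : n ≤ P) :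
    bosonicSum (X : k⟦X⟧) 1 (2 * N) N ≡ thetaPartial n * (qProd X 1 1 P)⁻¹
      [SMOD Ideal.span {X ^ n}] := by
  refine finsum_smodEq_thetaPartial (L := N) (by omega) (fun j hj => ?_) fun j hj => ?_
  · by_contra h
    exact hj (qBinom_eq_zero _ (by omega))
  · obtain ⟨hj₁, hj₂⟩ := abs_lt.mp (abs_lt_of_rrExp_lt hj)
    obtain ⟨K, hK⟩ : ∃ K : ℕ, (N : ℤ) + 2 * j = K := ⟨(N + 2 * j).toNat, by omega⟩
    rw [hK]
    refine (qBinom_smodEq_inv dvd_rfl (by omega) (by omega)).trans (smodEq_inv ?_ ?_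
      (qProd_smodEq dvd_rfl (by omega) (by omega))) <;> simp [constantCoeff_qProd]

lemma thetaSum_smodEq {m P : ℕ} (hm : 2 * n ≤ m) (hP : n ≤ P) :
    thetaSum (X : k⟦X⟧) (2 * m) m ≡ thetaPartial n * (qProd X 5 5 P)⁻¹
      [SMOD Ideal.span {X ^ n}] := by
  have hq : (X : k⟦X⟧) ∣ X ^ 5 := dvd_pow_self X (by norm_num)
  rw [show qProd (X : k⟦X⟧) 5 5 P = qProd (X ^ 5) 1 1 P by rw [qProd_pow]]
  refine finsum_smodEq_thetaPartial (L := m) (by omega) (fun j hj => ?_) fun j hj => ?_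
  · by_contra h
    exact hj (qBinom_eq_zero _ (by omega))
  · obtain ⟨hj₁, hj₂⟩ := abs_lt.mp (abs_lt_of_rrExp_lt hj)
    obtain ⟨K, hK⟩ : ∃ K : ℕ, (m : ℤ) - j = K := ⟨(m - j).toNat, by omega⟩
    rw [hK]
    refine (qBinom_smodEq_inv hq (by omega) (by omega)).trans (smodEq_inv ?_ ?_
      (qProd_smodEq hq (by omega) (by omega))) <;> simp [constantCoeff_qProd hq]

lemma fermionicSum_smodEq {N : ℕ} (hN : 2 * n ≤ N) :
    fermionicSum (X : k⟦X⟧) 0 N ≡ ∑ i ∈ range n, X ^ (i * i) * (qProd X 1 1 i)⁻¹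
      [SMOD Ideal.span {X ^ n}] := by
  rw [fermionicSum, ← sum_range_add_sum_Ico _ (show n ≤ N + 1 by omega)]
  conv_rhs => rw [← add_zero (∑ i ∈ range n, _)]
  refine SModEq.add (SModEq.sum fun i hi => ?_) ?_
  · have hi := mem_range.mp hi
    rw [zero_mul, add_zero]
    exact SModEq.rfl.mul (qBinom_smodEq_inv dvd_rfl (by omega) (by omega))
  · simpa using SModEq.sum (s := Ico n (N + 1)) fun i hi =>
      X_pow_mul_smodEq_zero (e := i * i + 0 * i) (by nlinarith [(mem_Ico.mp hi).1])
        (qBinom (X : k⟦X⟧) N i)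

theorem bosonicSum_smodEq_inv_qPochhammer {N : ℕ} (hN : 3 * n ≤ N) :
    bosonicSum (X : k⟦X⟧) 1 (2 * N) N ≡ (qPochhammer k 1 5 * qPochhammer k 4 5)⁻¹
      [SMOD Ideal.span {X ^ n}] := by
  have hT := (smodEq_mul_inv_iff (by simp [constantCoeff_qProd])).mp
    (bosonicSum_smodEq (k := k) (P := 5 * (2 * n)) hN (by omega))
  have hJ := (smodEq_mul_inv_iff (by simp [constantCoeff_qProd])).mp
    (thetaSum_smodEq (k := k) (m := 2 * n) (P := 2 * n) le_rfl (by omega))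
  rw [qProd_five_mul] at hT
  rw [thetaSum_eq_qProd] at hJ
  have hP₁ := qPochhammer_smodEq (R := k) (n := n) (a := 1) (b := 5) (m := 2 * n) (by norm_num)
    (by omega)
  have hP₄ := qPochhammer_smodEq (R := k) (n := n) (a := 4) (b := 5) (m := 2 * n) (by norm_num)
    (by omega)
  refine (smodEq_inv_of_mul_mul_smodEq ?_ ?_ (hT.trans hJ.symm)).trans
    (smodEq_inv ?_ ?_ (hP₁.mul hP₄)).symm <;>
    simp [constantCoeff_qProd, constantCoeff_qPochhammer]

end Approximation

lemma qPochFin_eq_qProd (m : ℕ) : qPochFin m = qProd X 1 1 m :=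
  prod_congr rfl fun i _ => by rw [one_mul, add_comm]

end RogersRamanujan

open RogersRamanujan

/-- The first Rogers–Ramanujan identity:
`∑_{n≥0} q^{n²}/(q;q)ₙ = 1/((q;q⁵)_∞ (q⁴;q⁵)_∞)` as formal power series. -/
theorem rogers_ramanujan_first :
    (PowerSeries.mk fun N => ∑ n ∈ Finset.range (N + 1),
        PowerSeries.coeff N ((X : PowerSeries ℚ) ^ (n ^ 2) * (qPochFin n)⁻¹)) =
      (qPochhammer ℚ 1 5 * qPochhammer ℚ 4 5)⁻¹ := by
  ext M
  have hL := fermionicSum_smodEq (k := ℚ) (n := M + 1) (N := 3 * (M + 1)) (by omega)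
  have hR := bosonicSum_smodEq_inv_qPochhammer (k := ℚ) (n := M + 1) le_rfl
  rw [(fermionicSum_eq_bosonicSum _ _).1] at hL
  rw [coeff_mk, ← smodEq_X_pow_iff.mp (hL.symm.trans hR) M (lt_add_one M), map_sum]
  refine sum_congr rfl fun i _ => ?_
  rw [qPochFin_eq_qProd, sq]
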